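/- arXiv:2107.07577 — 8 statements merged into one kernel-verified Lean document; each statement's English description precedes it below -/
import Mathlib

section
/- Let l ≥ 0 be a natural number. Let α : ℂ[x₁,…,x₅] → ℂ[y₁^{±1}, y₂^{±1}] be the ℂ-algebra homomorphism determined by α(x₁) = y₁y₂^{−l}, α(x₂) = y₁, α(x₃) = y₂, α(x₄) = y₂, α(x₅) = y₂. Then the kernel of α equals the ideal generated by the three binomials x₃ − x₄, x₃ − x₅, and x₁x₅^l − x₂. -/
/-!
The map `α` factors as `ℂ[x₁,…,x₅] → ℂ[u, v] → ℂ[y₁^{±1}, y₂^{±1}]`, where the first map sends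
`x ↦ (u, u v^l, v, v, v)` and the second sends `u ↦ y₁ y₂^{-l}`, `v ↦ y₂`. The second map is
injective since its exponent vectors `(1, -l)` and `(0, 1)` are linearly independent, so `ker α`
is the kernel of the first map. Modulo the three binomials, `x₁ ↦ u`, `x₃ ↦ v` is a left inverse of
the first map, so its kernel is exactly the ideal they generate.
-/

open MvPolynomial

/-- The Laurent monomial `y₁^{v 0} y₂^{v 1}` in the Laurent polynomial ring
`ℂ[y₁^{±1}, y₂^{±1}]`, realized as `AddMonoidAlgebra ℂ (Fin 2 → ℤ)`. -/
noncomputable def laurentMonomial2 (v : Fin 2 → ℤ) : AddMonoidAlgebra ℂ (Fin 2 → ℤ) :=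
  AddMonoidAlgebra.single v 1

theorem Finsupp.linearCombination_nat_injective {σ M : Type*} [AddCommGroup M] {v : σ → M}
    (hv : LinearIndependent ℤ v) : Function.Injective (Finsupp.linearCombination ℕ v) := by
  have h : ∀ d : σ →₀ ℕ, linearCombination ℕ v d =
      linearCombination ℤ v (d.mapRange (↑) Nat.cast_zero) := fun d => by
    simp [linearCombination_apply, sum_mapRange_index]
  intro d e hde
  rw [h, h] at hde
  exact mapRange_injective _ Nat.cast_zero Nat.cast_injective (hv hde)

theorem AddMonoidAlgebra.algebraicIndependent_single_one {R σ M : Type*} [CommRing R]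
    [AddCommGroup M] {v : σ → M} (hv : LinearIndependent ℤ v) :
    AlgebraicIndependent R (fun i => (single (v i) 1 : AddMonoidAlgebra R M)) := by
  rw [algebraicIndependent_iff_injective_aeval]
  have h : aeval (fun i => (single (v i) 1 : AddMonoidAlgebra R M)) =
      (mapDomainAlgHom R R (Finsupp.linearCombination ℕ v).toAddMonoidHom :
        MvPolynomial σ R →ₐ[R] AddMonoidAlgebra R M) :=
    MvPolynomial.algHom_ext fun i => by
      rw [aeval_X]
      simp [X, monomial, mapDomainAlgHom_apply]
  rw [h]
  exact mapDomain_injective (Finsupp.linearCombination_nat_injective hv)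

theorem laurentMonomial2_add (v w : Fin 2 → ℤ) :
    laurentMonomial2 (v + w) = laurentMonomial2 v * laurentMonomial2 w := by
  simp [laurentMonomial2, AddMonoidAlgebra.single_mul_single]

theorem laurentMonomial2_nsmul (n : ℕ) (v : Fin 2 → ℤ) :
    laurentMonomial2 (n • v) = laurentMonomial2 v ^ n := by
  simp [laurentMonomial2, AddMonoidAlgebra.single_pow]

theorem AlgHom.ker_eq_of_comp_eq_mkₐ {R A B : Type*} [CommSemiring R] [CommRing A] [Semiring B]
    [Algebra R A] [Algebra R B] {f : A →ₐ[R] B} {I : Ideal A} (hI : I ≤ RingHom.ker f)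
    (g : B →ₐ[R] A ⧸ I) (hgf : g.comp f = Ideal.Quotient.mkₐ R I) : RingHom.ker f = I := by
  refine le_antisymm (fun a ha => Ideal.Quotient.eq_zero_iff_mem.mp ?_) hI
  rw [← Ideal.Quotient.mkₐ_eq_mk R, ← hgf, AlgHom.comp_apply, RingHom.mem_ker.mp ha, map_zero]

namespace ProjBundleToric

noncomputable section
variable (R : Type*) [CommRing R] (l : ℕ)

def param : MvPolynomial (Fin 5) R →ₐ[R] MvPolynomial (Fin 2) R :=
  aeval ![X 0, X 0 * X 1 ^ l, X 1, X 1, X 1]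

def binomialIdeal : Ideal (MvPolynomial (Fin 5) R) :=
  Ideal.span {X 2 - X 3, X 2 - X 4, X 0 * X 4 ^ l - X 1}

theorem binomialIdeal_le_ker_param : binomialIdeal R l ≤ RingHom.ker (param R l) := by
  rw [binomialIdeal, Ideal.span_le]
  rintro q (rfl | rfl | rfl) <;> simp [param]

def retraction :
    MvPolynomial (Fin 2) R →ₐ[R] MvPolynomial (Fin 5) R ⧸ binomialIdeal R l :=
  aeval ![Ideal.Quotient.mk _ (X 0), Ideal.Quotient.mk _ (X 2)]

theorem retraction_comp_param :
    (retraction R l).comp (param R l) = Ideal.Quotient.mkₐ R (binomialIdeal R l) := by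
  set mk := Ideal.Quotient.mk (binomialIdeal R l)
  have h3 : mk (X 3) = mk (X 2) := (Ideal.Quotient.eq.2 (Ideal.subset_span (by simp))).symm
  have h4 : mk (X 4) = mk (X 2) := (Ideal.Quotient.eq.2 (Ideal.subset_span (by simp))).symm
  have h1 : mk (X 0) * mk (X 2) ^ l = mk (X 1) := by
    rw [← h4, ← map_pow, ← map_mul]
    exact Ideal.Quotient.eq.2 (Ideal.subset_span (by simp))
  refine MvPolynomial.algHom_ext fun i => ?_
  fin_cases i <;> simp [retraction, param, h3, h4, h1, mk]

theorem ker_param : RingHom.ker (param R l) = binomialIdeal R l :=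
  AlgHom.ker_eq_of_comp_eq_mkₐ (binomialIdeal_le_ker_param R l) _ (retraction_comp_param R l)

end

noncomputable def monomialEmbedding (l : ℕ) :
    MvPolynomial (Fin 2) ℂ →ₐ[ℂ] AddMonoidAlgebra ℂ (Fin 2 → ℤ) :=
  aeval fun i => laurentMonomial2 (![![1, -(l : ℤ)], ![0, 1]] i)

theorem linearIndependent_monomialExponents (l : ℕ) :
    LinearIndependent ℤ ![![1, -(l : ℤ)], ![0, 1]] := by
  rw [LinearIndependent.pair_iff]
  intro s t hst
  have h0 : s = 0 := by simpa using congrFun hst 0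
  have h1 : -(s * l) + t = 0 := by simpa using congrFun hst 1
  exact ⟨h0, by simpa [h0] using h1⟩

theorem monomialEmbedding_injective (l : ℕ) : Function.Injective (monomialEmbedding l) :=
  algebraicIndependent_iff_injective_aeval.mp
    (AddMonoidAlgebra.algebraicIndependent_single_one (linearIndependent_monomialExponents l))

theorem aeval_eq_monomialEmbedding_comp_param (l : ℕ) :
    aeval ![laurentMonomial2 ![1, -(l : ℤ)], laurentMonomial2 ![1, 0],
      laurentMonomial2 ![0, 1], laurentMonomial2 ![0, 1], laurentMonomial2 ![0, 1]] =
    (monomialEmbedding l).comp (param ℂ l) := by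
  have h : laurentMonomial2 ![1, 0] =
      laurentMonomial2 ![1, -(l : ℤ)] * laurentMonomial2 ![0, 1] ^ l := by
    rw [← laurentMonomial2_nsmul, ← laurentMonomial2_add]
    congr 1
    ext j; fin_cases j <;> simp
  refine MvPolynomial.algHom_ext fun i => ?_
  fin_cases i <;> simp [monomialEmbedding, param, h]

end ProjBundleToric

theorem toric_ideal_case_2_0_1 (l : ℕ) :
    RingHom.ker (MvPolynomial.aeval
        ![laurentMonomial2 ![1, -(l : ℤ)], laurentMonomial2 ![1, 0],
          laurentMonomial2 ![0, 1], laurentMonomial2 ![0, 1], laurentMonomial2 ![0, 1]] :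
      MvPolynomial (Fin 5) ℂ →ₐ[ℂ] AddMonoidAlgebra ℂ (Fin 2 → ℤ)) =
    Ideal.span {(X 2 - X 3 : MvPolynomial (Fin 5) ℂ), X 2 - X 4, X 0 * X 4 ^ l - X 1} := by
  rw [ProjBundleToric.aeval_eq_monomialEmbedding_comp_param, ← ProjBundleToric.binomialIdeal,
    ← ProjBundleToric.ker_param]
  exact RingHom.ker_comp_of_injective _ (ProjBundleToric.monomialEmbedding_injective l)
end

section
/- Let l₂ ≥ l₁ ≥ 0 be natural numbers. Let α : ℂ[x₁,…,x₅] → ℂ[y₁^{±1}, y₂^{±1}] be the ℂ-algebra homomorphism determined by α(x₁) = y₁y₂^{−l₁}, α(x₂) = y₁y₂^{−l₂}, α(x₃) = y₁, α(x₄) = y₂, α(x₅) = y₂. Then the kernel of α equals the ideal generated by the three binomials x₁ − x₂x₅^{l₂−l₁}, x₂x₅^{l₂} − x₃, and x₄ − x₅. -/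
/-!
Writing `s = y₁y₂^{-l₂}` and `t = y₂`, the map `α` factors through the polynomial ring `ℂ[s, t]`
as `x ↦ (s t^{l₂-l₁}, s, s t^{l₂}, t, t)` followed by the monomial map `ℂ[s, t] → ℂ[y^{±1}]`, which
is injective because the exponent vectors `(1, -l₂)` and `(0, 1)` are linearly independent. The
kernel of the first map is the ideal `I` of the three binomials: they lie in it, and modulo `I`
every polynomial is congruent to its image under the substitution `s ↦ x₂, t ↦ x₅`.
-/

open MvPolynomial

theorem RingHom.ker_eq_of_sub_mem {A B F G : Type*} [Ring A] [Semiring B]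
    [FunLike F A B] [RingHomClass F A B] [FunLike G B A] [RingHomClass G B A]
    (f : F) (g : G) {I : Ideal A} (hI : I ≤ RingHom.ker f) (h : ∀ a, a - g (f a) ∈ I) :
    RingHom.ker f = I := by
  refine le_antisymm (fun a ha => ?_) hI
  simpa [(RingHom.mem_ker).mp ha] using h a

theorem AlgHom.ker_comp_of_injective {R A B C : Type*} [CommSemiring R] [Semiring A] [Semiring B]
    [Semiring C] [Algebra R A] [Algebra R B] [Algebra R C] (g : A →ₐ[R] B) {f : B →ₐ[R] C}
    (hf : Function.Injective f) : RingHom.ker (f.comp g) = RingHom.ker g := by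
  ext a
  simp only [RingHom.mem_ker, AlgHom.comp_apply, map_eq_zero_iff f hf]

namespace MvPolynomial

theorem sub_mem_of_forall_X_sub_mem {σ R A : Type*} [CommSemiring R] [CommRing A] [Algebra R A]
    (f g : MvPolynomial σ R →ₐ[R] A) {I : Ideal A} (h : ∀ i, f (X i) - g (X i) ∈ I)
    (p : MvPolynomial σ R) : f p - g p ∈ I := by
  have : (Ideal.Quotient.mkₐ R I).comp f = (Ideal.Quotient.mkₐ R I).comp g :=
    algHom_ext fun i => by simpa [Ideal.Quotient.eq] using h i
  simpa [Ideal.Quotient.eq] using congrArg (· p) this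

theorem injective_aeval_single {σ R M : Type*} [CommSemiring R] [AddCommMonoid M]
    {v : σ → M} (hv : LinearIndependent ℕ v) :
    Function.Injective (aeval (R := R) fun i => AddMonoidAlgebra.single (v i) (1 : R)) := by
  have : (aeval (R := R) fun i => AddMonoidAlgebra.single (v i) (1 : R)) =
      AddMonoidAlgebra.mapDomainAlgHom R R (Finsupp.linearCombination ℕ v).toAddMonoidHom :=
    algHom_ext fun i => by rw [aeval_X]; simp [X, monomial]
  rw [this]
  exact AddMonoidAlgebra.mapDomain_injective hv

end MvPolynomial

theorem laurentMonomial2_mul (v w : Fin 2 → ℤ) :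
    laurentMonomial2 v * laurentMonomial2 w = laurentMonomial2 (v + w) := by
  simp [laurentMonomial2, AddMonoidAlgebra.single_mul_single]

theorem laurentMonomial2_pow (v : Fin 2 → ℤ) (n : ℕ) :
    laurentMonomial2 v ^ n = laurentMonomial2 (n • v) := by
  simp [laurentMonomial2, AddMonoidAlgebra.single_pow]

theorem linearIndependent_unitriangular_pair (l : ℤ) :
    LinearIndependent ℕ ![(![1, l] : Fin 2 → ℤ), ![0, 1]] := by
  refine (LinearIndependent.pair_iff (R := ℤ) |>.mpr fun s t hst => ?_).restrict_scalars' ℕ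
  have hs : s = 0 := by simpa using congrFun hst 0
  have ht : s * l + t = 0 := by simpa using congrFun hst 1
  exact ⟨hs, by simpa [hs] using ht⟩

theorem ker_aeval_toric_parametrization (l₁ l₂ : ℕ) :
    RingHom.ker (aeval ![X 0 * X 1 ^ (l₂ - l₁), X 0, X 0 * X 1 ^ l₂, X 1, X 1] :
      MvPolynomial (Fin 5) ℂ →ₐ[ℂ] MvPolynomial (Fin 2) ℂ) =
    Ideal.span {(X 0 - X 1 * X 4 ^ (l₂ - l₁) : MvPolynomial (Fin 5) ℂ),
      X 1 * X 4 ^ l₂ - X 2, X 3 - X 4} := by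
  set ψ : MvPolynomial (Fin 5) ℂ →ₐ[ℂ] MvPolynomial (Fin 2) ℂ :=
    aeval ![X 0 * X 1 ^ (l₂ - l₁), X 0, X 0 * X 1 ^ l₂, X 1, X 1]
  refine RingHom.ker_eq_of_sub_mem ψ (aeval ![X 1, X 4]) ?_ fun p => ?_
  · rw [Ideal.span_le]
    rintro _ (rfl | rfl | rfl) <;> simp [ψ]
  · refine sub_mem_of_forall_X_sub_mem (AlgHom.id ℂ _) ((aeval ![X 1, X 4]).comp ψ) (fun i => ?_) p
    fin_cases i <;> simp [ψ]
    · exact Ideal.subset_span (by simp)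
    · rw [← Ideal.neg_mem_iff, neg_sub]
      exact Ideal.subset_span (by simp)
    · exact Ideal.subset_span (by simp)

theorem toric_ideal_case_2_0_2 (l₁ l₂ : ℕ) (h : l₁ ≤ l₂) :
    RingHom.ker (MvPolynomial.aeval
        ![laurentMonomial2 ![1, -(l₁ : ℤ)], laurentMonomial2 ![1, -(l₂ : ℤ)],
          laurentMonomial2 ![1, 0], laurentMonomial2 ![0, 1], laurentMonomial2 ![0, 1]] :
      MvPolynomial (Fin 5) ℂ →ₐ[ℂ] AddMonoidAlgebra ℂ (Fin 2 → ℤ)) =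
    Ideal.span {(X 0 - X 1 * X 4 ^ (l₂ - l₁) : MvPolynomial (Fin 5) ℂ),
      X 1 * X 4 ^ l₂ - X 2, X 3 - X 4} := by
  set v : Fin 2 → Fin 2 → ℤ := ![![1, -(l₂ : ℤ)], ![0, 1]]
  set β : MvPolynomial (Fin 2) ℂ →ₐ[ℂ] AddMonoidAlgebra ℂ (Fin 2 → ℤ) :=
    aeval fun i => laurentMonomial2 (v i)
  have hβ : Function.Injective β :=
    injective_aeval_single (linearIndependent_unitriangular_pair _)
  have hexp : -(l₂ : ℤ) + (l₂ - l₁ : ℕ) = -(l₁ : ℤ) := by omega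
  have hfactor : aeval ![laurentMonomial2 ![1, -(l₁ : ℤ)], laurentMonomial2 ![1, -(l₂ : ℤ)],
      laurentMonomial2 ![1, 0], laurentMonomial2 ![0, 1], laurentMonomial2 ![0, 1]] =
      β.comp (aeval ![X 0 * X 1 ^ (l₂ - l₁), X 0, X 0 * X 1 ^ l₂, X 1, X 1]) :=
    algHom_ext fun i => by
      fin_cases i <;> simp [β, v, laurentMonomial2_mul, laurentMonomial2_pow, hexp]
  rw [hfactor, AlgHom.ker_comp_of_injective _ hβ, ker_aeval_toric_parametrization]
end

section
/- Let r, a, b ≥ 0 be natural numbers. Let α : ℂ[x₁,…,x₆] → ℂ[y₁^{±1}, y₂^{±1}, y₃^{±1}] be the ℂ-algebra homomorphism determined by α(x₁) = y₁, α(x₂) = y₁, α(x₃) = y₁^{−r}y₂, α(x₄) = y₂, α(x₅) = y₁^{−a}y₂^{−b}y₃, α(x₆) = y₃. Then the kernel of α equals the ideal generated by the three binomials x₁ − x₂, x₂^r x₃ − x₄, and x₂^{a+br} x₃^b x₅ − x₆. -/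
open MvPolynomial

/-!
Modulo the three binomials every variable is congruent to a polynomial in `x₂, x₃, x₅`:
`x₁ ≡ x₂`, `x₄ ≡ x₂^r x₃`, `x₆ ≡ x₂^(a+br) x₃^b x₅`. The map `α` sends `x₂, x₃, x₅` to Laurent
monomials with linearly independent exponent vectors, and such monomials are algebraically
independent. So a polynomial in `ker α` is congruent to a polynomial in `x₂, x₃, x₅` killed by `α`,
which must be zero.
-/

/-- The Laurent monomial `y₁^{v 0} y₂^{v 1} y₃^{v 2}` in the Laurent polynomial ring
`ℂ[y₁^{±1}, y₂^{±1}, y₃^{±1}]`, realized as `AddMonoidAlgebra ℂ (Fin 3 → ℤ)`. -/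
noncomputable def laurentMonomial3 (v : Fin 3 → ℤ) : AddMonoidAlgebra ℂ (Fin 3 → ℤ) :=
  AddMonoidAlgebra.single v 1

theorem MvPolynomial.ker_aeval_eq_of_algebraicIndependent_comp {R A σ τ : Type*} [CommRing R]
    [CommRing A] [Algebra R A] {x : σ → A} {ι : τ → σ} (hx : AlgebraicIndependent R (x ∘ ι))
    (ψ : MvPolynomial σ R →ₐ[R] MvPolynomial τ R) {I : Ideal (MvPolynomial σ R)}
    (hI : I ≤ RingHom.ker (aeval x)) (hψ : ∀ i, X i - rename ι (ψ (X i)) ∈ I) :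
    RingHom.ker (aeval x) = I := by
  refine le_antisymm (fun p hp ↦ ?_) hI
  have hmk : (Ideal.Quotient.mkₐ R I).comp ((rename ι).comp ψ) = Ideal.Quotient.mkₐ R I :=
    algHom_ext fun i ↦ by simpa using ((Ideal.Quotient.mk_eq_mk_iff_sub_mem _ _).2 (hψ i)).symm
  have haeval : (aeval x).comp ((rename ι).comp ψ) = aeval x := algHom_ext fun i ↦ by
    have h := RingHom.mem_ker.1 (hI (hψ i))
    rw [map_sub, sub_eq_zero] at h
    simpa using h.symm
  have hψp : ψ p = 0 := hx <| by
    rw [map_zero, ← aeval_rename, ← AlgHom.comp_apply, ← AlgHom.comp_apply, AlgHom.comp_assoc,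
      haeval]
    exact hp
  rw [← Ideal.Quotient.eq_zero_iff_mem, ← Ideal.Quotient.mkₐ_eq_mk R, ← hmk]
  simp [hψp]

theorem AddMonoidAlgebra.algebraicIndependent_single_of_linearIndependent
    {R M σ : Type*} [CommRing R] [AddCommGroup M] {e : σ → M} (he : LinearIndependent ℤ e) :
    AlgebraicIndependent R fun i ↦ AddMonoidAlgebra.single (e i) (1 : R) := by
  have hmap : aeval (fun i ↦ AddMonoidAlgebra.single (e i) (1 : R)) =
      (AddMonoidAlgebra.mapDomainAlgHom R R (Finsupp.linearCombination ℕ e).toAddMonoidHom :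
        MvPolynomial σ R →ₐ[R] AddMonoidAlgebra R M) := by
    refine MvPolynomial.algHom_ext fun i ↦ ?_
    rw [aeval_X]
    exact (AddMonoidAlgebra.mapDomain_single ..).trans (by simp) |>.symm
  unfold AlgebraicIndependent
  rw [hmap]
  exact AddMonoidAlgebra.mapDomain_injective (he.restrict_scalars' ℕ)

theorem linearIndependent_lowerUnitriangular (p q s : ℤ) :
    LinearIndependent ℤ ![(![1, 0, 0] : Fin 3 → ℤ), ![p, 1, 0], ![q, s, 1]] := by
  rw [Fintype.linearIndependent_iff]
  intro g hg
  have h0 := congrFun hg 0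
  have h1 := congrFun hg 1
  have h2 := congrFun hg 2
  simp only [Fin.sum_univ_three, Finset.sum_apply, Pi.smul_apply, smul_eq_mul, Pi.zero_apply,
    Matrix.cons_val_zero, Matrix.cons_val_one, Matrix.cons_val, mul_one, mul_zero, add_zero,
    zero_add] at h0 h1 h2
  intro i
  fin_cases i <;> simp_all

theorem toric_ideal_case_3_0_1 (r a b : ℕ) :
    RingHom.ker (MvPolynomial.aeval
        ![laurentMonomial3 ![1, 0, 0], laurentMonomial3 ![1, 0, 0],
          laurentMonomial3 ![-(r : ℤ), 1, 0], laurentMonomial3 ![0, 1, 0],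
          laurentMonomial3 ![-(a : ℤ), -(b : ℤ), 1], laurentMonomial3 ![0, 0, 1]] :
      MvPolynomial (Fin 6) ℂ →ₐ[ℂ] AddMonoidAlgebra ℂ (Fin 3 → ℤ)) =
    Ideal.span {(X 0 - X 1 : MvPolynomial (Fin 6) ℂ),
      X 1 ^ r * X 2 - X 3, X 1 ^ (a + b * r) * X 2 ^ b * X 4 - X 5} := by
  refine ker_aeval_eq_of_algebraicIndependent_comp (ι := ![1, 2, 4]) ?_
    (aeval ![X 0, X 0, X 1, X 0 ^ r * X 1, X 2, X 0 ^ (a + b * r) * X 1 ^ b * X 2]) ?_ ?_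
  · convert AddMonoidAlgebra.algebraicIndependent_single_of_linearIndependent (R := ℂ)
      (linearIndependent_lowerUnitriangular (-r) (-a) (-b)) with i
    fin_cases i <;> rfl
  · rw [Ideal.span_le]
    rintro q (rfl | rfl | rfl) <;>
      simp [laurentMonomial3, AddMonoidAlgebra.single_pow, AddMonoidAlgebra.single_mul_single]
  · intro i
    fin_cases i <;> simp only [Fin.isValue, Fin.zero_eta, Fin.mk_one, Fin.reduceFinMk, aeval_X,
      Matrix.cons_val, Matrix.cons_val_zero, Matrix.cons_val_one, map_mul, map_pow, rename_X,
      sub_self, zero_mem]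
    · exact Ideal.subset_span (by simp)
    all_goals exact sub_mem_comm_iff.1 (Ideal.subset_span (by simp))
end

section
/- Let r, a ≥ 0 be natural numbers and b < 0 an integer with a + br ≥ 0. Let α : ℂ[x₁,…,x₆] → ℂ[y₁^{±1}, y₂^{±1}, y₃^{±1}] be the ℂ-algebra homomorphism determined by α(x₁) = y₁, α(x₂) = y₁, α(x₃) = y₁^{−r}y₂, α(x₄) = y₂, α(x₅) = y₁^{−a}y₂^{−b}y₃, α(x₆) = y₃. Then the kernel of α equals the ideal generated by the three binomials x₁ − x₂, x₂^r x₃ − x₄, and x₂^{a+br} x₅ − x₃^{−b} x₆. -/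
/-!
A monomial map `α : X i ↦ y ^ v i` sends `X ^ u` to `y ^ weight v u`. If, modulo an ideal
`I ⊆ ker α`, every monomial is congruent to a normal form depending only on its weight, then
reducing `f ∈ ker α` to normal forms gives `f ≡ mapDomain (normal form) (α f) = 0` modulo `I`.

Here `X 0 - X 1` and `X 1 ^ r * X 2 - X 3` eliminate `X 0` and `X 3`, and the third binomial
trades `X 2 ^ (-b) * X 5` for `X 1 ^ (a + b r) * X 4`. Applying it as often as possible gives a
normal form whose `X 4`-degree is `min (w 2) (w 1 / -b)`, a function of the weight `w`.
-/

open MvPolynomial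

section

variable {σ R M : Type*} [CommRing R] [AddCommMonoid M] (v : σ → M)

theorem aeval_single_monomial (u : σ →₀ ℕ) (c : R) :
    aeval (fun i => AddMonoidAlgebra.single (v i) (1 : R)) (monomial u c) =
      AddMonoidAlgebra.single (Finsupp.weight v u) c := by
  simp only [aeval_monomial, Finsupp.prod, AddMonoidAlgebra.single_pow, one_pow,
    AddMonoidAlgebra.prod_single, Finset.prod_const_one, AddMonoidAlgebra.coe_algebraMap,
    Function.comp_apply, Algebra.algebraMap_self, RingHom.id_apply,
    AddMonoidAlgebra.single_mul_single, zero_add, mul_one, Finsupp.weight_apply, Finsupp.sum]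

theorem ker_aeval_single_le (I : Ideal (MvPolynomial σ R)) (N : M → σ →₀ ℕ)
    (hN : ∀ u, monomial u (1 : R) - monomial (N (Finsupp.weight v u)) 1 ∈ I) :
    RingHom.ker (aeval fun i => AddMonoidAlgebra.single (v i) (1 : R)) ≤ I := by
  have sub_normalForm_mem : ∀ f, f - AddMonoidAlgebra.mapDomain N
      (aeval (fun i => AddMonoidAlgebra.single (v i) (1 : R)) f) ∈ I := by
    intro f
    induction f using MvPolynomial.induction_on' with
    | monomial u c =>
      rw [aeval_single_monomial, AddMonoidAlgebra.mapDomain_single, single_eq_monomial,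
        ← mul_one c, ← C_mul_monomial, ← C_mul_monomial, ← mul_sub]
      exact I.mul_mem_left (C c) (hN u)
    | add p q hp hq =>
      rw [map_add, AddMonoidAlgebra.mapDomain_add, add_sub_add_comm]
      exact add_mem hp hq
  intro f hf
  simpa [RingHom.mem_ker.mp hf] using sub_normalForm_mem f

theorem monomial_one_eq_prod [Fintype σ] (u : σ →₀ ℕ) :
    monomial u (1 : R) = ∏ i, X i ^ u i := by
  rw [monomial_eq, C_1, one_mul, Finsupp.prod_fintype _ _ fun _ => pow_zero _]

end

namespace SplittingFanToric

variable (r a : ℕ) (b : ℤ)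

def exponents : Fin 6 → Fin 3 → ℤ :=
  ![![1, 0, 0], ![1, 0, 0], ![-(r : ℤ), 1, 0], ![0, 1, 0], ![-(a : ℤ), -b, 1], ![0, 0, 1]]

theorem weight_exponents (u : Fin 6 →₀ ℕ) :
    Finsupp.weight (exponents r a b) u =
      ![(u 0 + u 1 - r * u 2 - a * u 4 : ℤ), u 2 + u 3 - b * u 4, u 4 + u 5] := by
  ext j
  fin_cases j <;>
    simp only [exponents, Finsupp.weight_eq_sum, Fin.sum_univ_six, Finset.sum_apply,
      nsmul_eq_mul, Pi.mul_apply, Pi.natCast_apply, Fin.zero_eta, Fin.mk_one, Fin.reduceFinMk,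
      Fin.isValue, Matrix.cons_val', Matrix.cons_val, Matrix.cons_val_zero, Matrix.cons_val_one,
      Matrix.cons_val_fin_one, mul_one, mul_zero, mul_neg, add_zero, zero_add] <;> ring

-- The exponent vector of weight `w` with no `X 0`, `X 3` and the largest possible `X 4`-degree.
noncomputable def normalForm (w : Fin 3 → ℤ) : Fin 6 →₀ ℕ :=
  let n₄ := min (w 2) (w 1 / -b)
  let n₂ := w 1 + b * n₄
  Finsupp.equivFunOnFinite.symm
    ![0, (w 0 + r * n₂ + a * n₄).toNat, n₂.toNat, 0, n₄.toNat, (w 2 - n₄).toNat]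

theorem normalForm_weight (hb : b < 0) (hab : 0 ≤ (a : ℤ) + b * r) (u : Fin 6 →₀ ℕ) :
    ∃ k m n, u 2 + u 3 = m + (-b).toNat * k ∧ u 5 = n + k ∧
      normalForm r a b (Finsupp.weight (exponents r a b) u) =
        Finsupp.equivFunOnFinite.symm
          ![0, u 0 + u 1 + r * u 3 + ((a : ℤ) + b * r).toNat * k, m, 0, u 4 + k, n] := by
  have hs : (((a : ℤ) + b * r).toNat : ℤ) = a + b * r := Int.toNat_of_nonneg hab
  have hq : ((-b).toNat : ℤ) = -b := Int.toNat_of_nonneg (by omega)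
  set q := (-b).toNat
  set k := min (u 5) ((u 2 + u 3) / q)
  have hk5 : k ≤ u 5 := min_le_left _ _
  have hkq : q * k ≤ u 2 + u 3 :=
    (Nat.mul_le_mul_left q (min_le_right _ _)).trans (Nat.mul_div_le _ _)
  refine ⟨k, u 2 + u 3 - q * k, u 5 - k, by omega, by omega, ?_⟩
  have hw₁ : (u 2 + u 3 - b * u 4 : ℤ) = ((u 2 + u 3 : ℕ) : ℤ) + u 4 * q := by
    push_cast [hq]; ring
  have hn₄ : min ((u 4 : ℤ) + u 5) ((u 2 + u 3 - b * u 4) / -b) = u 4 + k := by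
    rw [hw₁, ← hq, Int.add_mul_ediv_right _ _ (by omega), ← Int.natCast_ediv,
      add_comm _ (u 4 : ℤ), min_add_add_left]
    push_cast [k]
    rfl
  simp only [normalForm, weight_exponents, Matrix.cons_val_zero, Matrix.cons_val_one,
    Matrix.cons_val, hn₄]
  have toNat_of_eq {x : ℤ} {n : ℕ} (h : x = n) : x.toNat = n := by omega
  congr 1
  simp only [Matrix.vecCons_inj, true_and, and_true]
  refine ⟨toNat_of_eq ?_, toNat_of_eq ?_, toNat_of_eq ?_, toNat_of_eq ?_⟩ <;>
    push_cast [hs, hq, Nat.cast_sub hkq, Nat.cast_sub hk5] <;> ring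

variable (R : Type*) [CommRing R]

noncomputable def binomialIdeal : Ideal (MvPolynomial (Fin 6) R) :=
  Ideal.span {X 0 - X 1, X 1 ^ r * X 2 - X 3,
    X 1 ^ ((a : ℤ) + b * r).toNat * X 4 - X 2 ^ (-b).toNat * X 5}

theorem binomialIdeal_le_ker (hb : b < 0) (hab : 0 ≤ (a : ℤ) + b * r) :
    binomialIdeal r a b R ≤
      RingHom.ker (aeval fun i => AddMonoidAlgebra.single (exponents r a b i) (1 : R)) := by
  have hs : (((a : ℤ) + b * r).toNat : ℤ) = a + b * r := Int.toNat_of_nonneg hab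
  have hq : ((-b).toNat : ℤ) = -b := Int.toNat_of_nonneg (by omega)
  rw [binomialIdeal, Ideal.span_le]
  rintro g (rfl | rfl | rfl) <;>
    simp only [SetLike.mem_coe, RingHom.mem_ker, map_sub, map_mul, map_pow, aeval_X,
      AddMonoidAlgebra.single_pow, AddMonoidAlgebra.single_mul_single, one_pow, mul_one,
      sub_eq_zero]
  · rfl
  all_goals
    congr 1
    ext j
    fin_cases j <;> simp [exponents, hs, hq]

theorem mk_monomial_eq (u : Fin 6 →₀ ℕ) (k m n : ℕ)
    (hm : u 2 + u 3 = m + (-b).toNat * k) (hn : u 5 = n + k) :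
    Ideal.Quotient.mk (binomialIdeal r a b R) (monomial u 1) =
      Ideal.Quotient.mk (binomialIdeal r a b R)
        (X 1 ^ (u 0 + u 1 + r * u 3 + ((a : ℤ) + b * r).toNat * k) * X 2 ^ m *
          X 4 ^ (u 4 + k) * X 5 ^ n) := by
  set φ := Ideal.Quotient.mk (binomialIdeal r a b R)
  have mem {g} (hg : g ∈ ({X 0 - X 1, X 1 ^ r * X 2 - X 3,
      X 1 ^ ((a : ℤ) + b * r).toNat * X 4 - X 2 ^ (-b).toNat * X 5} :
        Set (MvPolynomial (Fin 6) R))) : g ∈ binomialIdeal r a b R := Ideal.subset_span hg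
  have h0 : φ (X 0) = φ (X 1) := Ideal.Quotient.eq.mpr (mem (by simp))
  have h3 : φ (X 3) = φ (X 1) ^ r * φ (X 2) := by
    rw [← map_pow, ← map_mul]; exact (Ideal.Quotient.eq.mpr (mem (by simp))).symm
  have h5 : φ (X 1) ^ ((a : ℤ) + b * r).toNat * φ (X 4) = φ (X 2) ^ (-b).toNat * φ (X 5) := by
    simp only [← map_pow, ← map_mul]; exact Ideal.Quotient.eq.mpr (mem (by simp))
  rw [monomial_one_eq_prod, map_prod, Fin.prod_univ_six]
  simp only [map_mul, map_pow, h0, h3, hn]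
  set A := φ (X 1)
  set B := φ (X 2)
  calc A ^ u 0 * A ^ u 1 * B ^ u 2 * (A ^ r * B) ^ u 3 * φ (X 4) ^ u 4 * φ (X 5) ^ (n + k)
      = A ^ (u 0 + u 1 + r * u 3) * B ^ (u 2 + u 3) * φ (X 4) ^ u 4 * φ (X 5) ^ n *
          φ (X 5) ^ k := by ring
    _ = A ^ (u 0 + u 1 + r * u 3) * B ^ m * φ (X 4) ^ u 4 * φ (X 5) ^ n *
          (B ^ (-b).toNat * φ (X 5)) ^ k := by rw [hm]; ring
    _ = A ^ (u 0 + u 1 + r * u 3) * B ^ m * φ (X 4) ^ u 4 * φ (X 5) ^ n *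
          (A ^ ((a : ℤ) + b * r).toNat * φ (X 4)) ^ k := by rw [h5]
    _ = _ := by ring

theorem monomial_sub_monomial_normalForm_mem (hb : b < 0) (hab : 0 ≤ (a : ℤ) + b * r)
    (u : Fin 6 →₀ ℕ) :
    monomial u 1 - monomial (normalForm r a b (Finsupp.weight (exponents r a b) u)) 1 ∈
      binomialIdeal r a b R := by
  obtain ⟨k, m, n, hm, hn, hN⟩ := normalForm_weight r a b hb hab u
  rw [← Ideal.Quotient.eq, mk_monomial_eq r a b R u k m n hm hn, hN, monomial_one_eq_prod,
    Fin.prod_univ_six]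
  simp

end SplittingFanToric

open SplittingFanToric in
theorem toric_ideal_case_3_0_2 (r a : ℕ) (b : ℤ) (hb : b < 0) (hab : 0 ≤ (a : ℤ) + b * r) :
    RingHom.ker (MvPolynomial.aeval
        ![laurentMonomial3 ![1, 0, 0], laurentMonomial3 ![1, 0, 0],
          laurentMonomial3 ![-(r : ℤ), 1, 0], laurentMonomial3 ![0, 1, 0],
          laurentMonomial3 ![-(a : ℤ), -b, 1], laurentMonomial3 ![0, 0, 1]] :
      MvPolynomial (Fin 6) ℂ →ₐ[ℂ] AddMonoidAlgebra ℂ (Fin 3 → ℤ)) =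
    Ideal.span {(X 0 - X 1 : MvPolynomial (Fin 6) ℂ),
      X 1 ^ r * X 2 - X 3, X 1 ^ ((a : ℤ) + b * r).toNat * X 4 - X 2 ^ (-b).toNat * X 5} := by
  have hα : ![laurentMonomial3 ![1, 0, 0], laurentMonomial3 ![1, 0, 0],
      laurentMonomial3 ![-(r : ℤ), 1, 0], laurentMonomial3 ![0, 1, 0],
      laurentMonomial3 ![-(a : ℤ), -b, 1], laurentMonomial3 ![0, 0, 1]] =
        fun i => AddMonoidAlgebra.single (exponents r a b i) 1 := by
    funext i
    fin_cases i <;> rfl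
  rw [hα]
  exact le_antisymm
    (ker_aeval_single_le _ _ _ (monomial_sub_monomial_normalForm_mem r a b ℂ hb hab))
    (binomialIdeal_le_ker r a b ℂ hb hab)
end

section
/- Let b₁ ≥ 0 be a natural number. Let α : ℂ[x₁,…,x₆] → ℂ[y₁^{±1}, y₂^{±1}, y₃^{±1}] be the ℂ-algebra homomorphism determined by α(x₁) = y₁, α(x₂) = y₁, α(x₃) = y₂, α(x₄) = y₁y₂^{−1}, α(x₅) = y₁^{−b₁−1}y₂y₃, α(x₆) = y₃. Then the kernel of α equals the ideal generated by the three binomials x₁ − x₃x₄, x₂ − x₃x₄, and x₃^{b₁} x₄^{b₁+1} x₅ − x₆. -/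
open MvPolynomial

theorem RingHom.ker_eq_of_sub_mem_of_injective_comp {A B C F G : Type*} [Ring A] [Ring B]
    [Semiring C] [FunLike F A B] [RingHomClass F A B] [FunLike G C A] [RingHomClass G C A]
    {f : F} {I : Ideal A} (hI : I ≤ RingHom.ker f) (g : G) (r : A → C)
    (hinj : Function.Injective (f ∘ g)) (hr : ∀ a, a - g (r a) ∈ I) : RingHom.ker f = I := by
  refine le_antisymm (fun a ha => ?_) hI
  have hfa : f (g (r a)) = 0 := by
    simpa [RingHom.mem_ker.1 ha] using hI (hr a)
  have : r a = 0 := hinj (by simpa using hfa)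
  simpa [this] using hr a

theorem MvPolynomial.aeval_single_one_eq_mapDomainAlgHom {σ R M : Type*} [CommSemiring R]
    [AddCommMonoid M] (v : σ → M) :
    aeval (fun i => AddMonoidAlgebra.single (v i) (1 : R)) =
      AddMonoidAlgebra.mapDomainAlgHom R R (Finsupp.linearCombination ℕ v).toAddMonoidHom := by
  refine MvPolynomial.algHom_ext fun i => ?_
  rw [aeval_X, AddMonoidAlgebra.mapDomainAlgHom_apply, X, ← single_eq_monomial,
    AddMonoidAlgebra.mapDomain_single]
  simp

theorem MvPolynomial.aeval_single_one_injective {σ R M : Type*} [CommSemiring R]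
    [AddCommMonoid M] {v : σ → M} (hv : LinearIndependent ℕ v) :
    Function.Injective (aeval (R := R) fun i => AddMonoidAlgebra.single (v i) (1 : R)) := by
  rw [aeval_single_one_eq_mapDomainAlgHom]
  exact AddMonoidAlgebra.mapDomain_injective hv

theorem MvPolynomial.sub_mem_of_forall_X_sub_mem_s4 {σ R : Type*} [CommRing R]
    {I : Ideal (MvPolynomial σ R)} (φ : MvPolynomial σ R →ₐ[R] MvPolynomial σ R)
    (h : ∀ i, X i - φ (X i) ∈ I) (p : MvPolynomial σ R) : p - φ p ∈ I := by
  have : (Ideal.Quotient.mkₐ R I).comp φ = Ideal.Quotient.mkₐ R I :=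
    MvPolynomial.algHom_ext fun i => ((Ideal.Quotient.mk_eq_mk_iff_sub_mem _ _).2 (h i)).symm
  exact (Ideal.Quotient.mk_eq_mk_iff_sub_mem _ _).1 (congr($this p)).symm

section Case311

variable (b : ℕ)

noncomputable def case311Map : MvPolynomial (Fin 6) ℂ →ₐ[ℂ] AddMonoidAlgebra ℂ (Fin 3 → ℤ) :=
  aeval ![laurentMonomial3 ![1, 0, 0], laurentMonomial3 ![1, 0, 0],
    laurentMonomial3 ![0, 1, 0], laurentMonomial3 ![1, -1, 0],
    laurentMonomial3 ![-((b : ℤ) + 1), 1, 1], laurentMonomial3 ![0, 0, 1]]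

noncomputable def case311Ideal : Ideal (MvPolynomial (Fin 6) ℂ) :=
  Ideal.span {X 0 - X 2 * X 3, X 1 - X 2 * X 3, X 2 ^ b * X 3 ^ (b + 1) * X 4 - X 5}

theorem case311Ideal_le_ker : case311Ideal b ≤ RingHom.ker (case311Map b) := by
  rw [case311Ideal, Ideal.span_le]
  rintro p (rfl | rfl | rfl) <;>
  simp [case311Map, laurentMonomial3, AddMonoidAlgebra.single_mul_single,
    AddMonoidAlgebra.single_pow]

def case311Exponents : Fin 3 → Fin 3 → ℤ := ![![0, 1, 0], ![1, -1, 0], ![-((b : ℤ) + 1), 1, 1]]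

theorem linearIndependent_case311Exponents : LinearIndependent ℤ (case311Exponents b) := by
  rw [Fintype.linearIndependent_iff]
  intro c hc
  have h2 : c 2 = 0 := by simpa [case311Exponents, Fin.sum_univ_three] using congrFun hc 2
  have h1 : c 1 = 0 := by simpa [case311Exponents, Fin.sum_univ_three, h2] using congrFun hc 0
  have h0 : c 0 = 0 := by
    simpa [case311Exponents, Fin.sum_univ_three, h1, h2] using congrFun hc 1
  intro i
  fin_cases i
  exacts [h0, h1, h2]

theorem case311Map_comp_rename_injective :
    Function.Injective ((case311Map b).comp (rename ![2, 3, 4])) := by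
  have : (case311Map b).comp (rename ![2, 3, 4]) =
      aeval fun i => AddMonoidAlgebra.single (case311Exponents b i) 1 :=
    MvPolynomial.algHom_ext fun i => by
      fin_cases i <;> simp [case311Map, case311Exponents, laurentMonomial3]
  rw [this]
  exact aeval_single_one_injective ((linearIndependent_case311Exponents b).restrict_scalars' ℕ)

/-- Solves the three binomials for `x₁`, `x₂`, `x₆`; the target variables `X 0, X 1, X 2` stand
for `x₃, x₄, x₅`. -/
noncomputable def case311Elim : MvPolynomial (Fin 6) ℂ →ₐ[ℂ] MvPolynomial (Fin 3) ℂ :=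
  aeval ![X 0 * X 1, X 0 * X 1, X 0, X 1, X 2, X 0 ^ b * X 1 ^ (b + 1) * X 2]

theorem sub_rename_case311Elim_mem (p : MvPolynomial (Fin 6) ℂ) :
    p - rename ![2, 3, 4] (case311Elim b p) ∈ case311Ideal b := by
  refine sub_mem_of_forall_X_sub_mem_s4 ((rename ![2, 3, 4]).comp (case311Elim b)) (fun i => ?_) p
  have hgen : ∀ q ∈ ({X 0 - X 2 * X 3, X 1 - X 2 * X 3, X 2 ^ b * X 3 ^ (b + 1) * X 4 - X 5} :
      Set (MvPolynomial (Fin 6) ℂ)), q ∈ case311Ideal b := fun _ hq => Ideal.subset_span hq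
  have hgen₅ : X 5 - X 2 ^ b * X 3 ^ (b + 1) * X 4 ∈ case311Ideal b :=
    sub_mem_comm_iff.1 (hgen _ (by simp))
  fin_cases i <;> simp [case311Elim, hgen, hgen₅]

end Case311

theorem toric_ideal_case_3_1_1 (b₁ : ℕ) :
    RingHom.ker (MvPolynomial.aeval
        ![laurentMonomial3 ![1, 0, 0], laurentMonomial3 ![1, 0, 0],
          laurentMonomial3 ![0, 1, 0], laurentMonomial3 ![1, -1, 0],
          laurentMonomial3 ![-((b₁ : ℤ) + 1), 1, 1], laurentMonomial3 ![0, 0, 1]] :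
      MvPolynomial (Fin 6) ℂ →ₐ[ℂ] AddMonoidAlgebra ℂ (Fin 3 → ℤ)) =
    Ideal.span {(X 0 - X 2 * X 3 : MvPolynomial (Fin 6) ℂ),
      X 1 - X 2 * X 3, X 2 ^ b₁ * X 3 ^ (b₁ + 1) * X 4 - X 5} :=
  RingHom.ker_eq_of_sub_mem_of_injective_comp (case311Ideal_le_ker b₁) (rename ![2, 3, 4])
    (case311Elim b₁) (case311Map_comp_rename_injective b₁) (sub_rename_case311Elim_mem b₁)
end

section
/- Let l ≥ 0 be a natural number. In the polynomial ring ℂ[x₁,…,x₅], the ideal I = (x₃ − x₄, x₃ − x₅, x₁x₅^l − x₂) is a prime ideal. -/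
open MvPolynomial

noncomputable def ψ (l : ℕ) : MvPolynomial (Fin 5) ℂ →ₐ[ℂ] MvPolynomial (Fin 2) ℂ :=
  aeval ![X 0, X 0 * X 1 ^ l, X 1, X 1, X 1]

noncomputable def σ : MvPolynomial (Fin 2) ℂ →ₐ[ℂ] MvPolynomial (Fin 5) ℂ :=
  aeval ![X 0, X 2]

theorem ideal_isPrime_case_2_0_1 (l : ℕ) :
    (Ideal.span {(X 2 - X 3 : MvPolynomial (Fin 5) ℂ), X 2 - X 4,
      X 0 * X 4 ^ l - X 1}).IsPrime := by
  set I := Ideal.span {(X 2 - X 3 : MvPolynomial (Fin 5) ℂ), X 2 - X 4,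
      X 0 * X 4 ^ l - X 1} with hI
  have h1 : (X 2 - X 3 : MvPolynomial (Fin 5) ℂ) ∈ I := Ideal.subset_span (by simp)
  have h2 : (X 2 - X 4 : MvPolynomial (Fin 5) ℂ) ∈ I := Ideal.subset_span (by simp)
  have h3 : (X 0 * X 4 ^ l - X 1 : MvPolynomial (Fin 5) ℂ) ∈ I := Ideal.subset_span (by simp)
  have key : ∀ p : MvPolynomial (Fin 5) ℂ, p - σ (ψ l p) ∈ I := by
    intro p
    induction p using MvPolynomial.induction_on with
    | C a => simp [ψ, σ]
    | add p q hp hq =>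
        have h := I.add_mem hp hq
        have : p + q - σ (ψ l (p + q)) = (p - σ (ψ l p)) + (q - σ (ψ l q)) := by
          simp only [map_add]; ring
        rw [this]; exact h
    | mul_X p i hp =>
        have hXi : (X i : MvPolynomial (Fin 5) ℂ) - σ (ψ l (X i)) ∈ I := by
          fin_cases i
          · simp [ψ, σ]
          · show (X 1 : MvPolynomial (Fin 5) ℂ) - σ (ψ l (X 1)) ∈ I
            obtain ⟨c, hc⟩ : (X 2 - X 4 : MvPolynomial (Fin 5) ℂ) ∣ X 2 ^ l - X 4 ^ l :=
              sub_dvd_pow_sub_pow _ _ _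
            have heval : σ (ψ l (X 1 : MvPolynomial (Fin 5) ℂ)) = X 0 * X 2 ^ l := by
              simp [ψ, σ]
            rw [heval]
            have : (X 1 : MvPolynomial (Fin 5) ℂ) - X 0 * X 2 ^ l
                = -(X 0 * X 4 ^ l - X 1) - X 0 * ((X 2 - X 4) * c) := by
              rw [← hc]; ring
            rw [this]
            exact I.sub_mem (I.neg_mem h3) (I.mul_mem_left _ (I.mul_mem_right _ h2))
          · simp [ψ, σ]
          · show (X 3 : MvPolynomial (Fin 5) ℂ) - σ (ψ l (X 3)) ∈ I
            have heval : σ (ψ l (X 3 : MvPolynomial (Fin 5) ℂ)) = X 2 := by simp [ψ, σ]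
            rw [heval]
            have : (X 3 : MvPolynomial (Fin 5) ℂ) - X 2 = -(X 2 - X 3) := by ring
            rw [this]; exact I.neg_mem h1
          · show (X 4 : MvPolynomial (Fin 5) ℂ) - σ (ψ l (X 4)) ∈ I
            have heval : σ (ψ l (X 4 : MvPolynomial (Fin 5) ℂ)) = X 2 := by simp [ψ, σ]
            rw [heval]
            have : (X 4 : MvPolynomial (Fin 5) ℂ) - X 2 = -(X 2 - X 4) := by ring
            rw [this]; exact I.neg_mem h2
        have heq : p * X i - σ (ψ l (p * X i)) =
            (p - σ (ψ l p)) * X i + σ (ψ l p) * (X i - σ (ψ l (X i))) := by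
          simp only [map_mul]; ring
        rw [heq]
        exact I.add_mem (I.mul_mem_right _ hp) (I.mul_mem_left _ hXi)
  have hker : I = RingHom.ker (ψ l).toRingHom := by
    apply le_antisymm
    · rw [hI, Ideal.span_le]
      intro x hx
      simp only [Set.mem_insert_iff, Set.mem_singleton_iff] at hx
      rcases hx with rfl | rfl | rfl <;>
        simp [RingHom.mem_ker, ψ]
    · intro p hp
      have h := key p
      have hp' : ψ l p = 0 := hp
      rw [hp'] at h
      simpa using h
  rw [hker]
  exact RingHom.ker_isPrime _
end

section
/- Let a ≥ 1 and b, l ≥ 0 be natural numbers with l + b ≥ 1. The set of integer points (x, y) ∈ ℤ² satisfying 0 < x < a, y > −b and y < lx is finite and has cardinality (as an integer) (a−1)(b−1) + la(a−1)/2. -/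
private lemma gauss_int (a : ℕ) :
    2 * ∑ x ∈ Finset.Ioo (0:ℤ) (a:ℤ), x = (a:ℤ) * ((a:ℤ) - 1) := by
  induction a with
  | zero => simp
  | succ n ih =>
    rcases Nat.eq_zero_or_pos n with hn | hn
    · subst hn; simp [Finset.Ioo_eq_empty]
      decide
    · have h1 : Finset.Ioo (0:ℤ) ((n:ℤ)+1) = insert (n:ℤ) (Finset.Ioo (0:ℤ) (n:ℤ)) := by
        rw [Finset.Ioo_insert_right (by exact_mod_cast hn)]
        ext z
        simp only [Finset.mem_Ioo, Finset.mem_Ioc]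
        omega
      push_cast
      rw [h1, Finset.sum_insert (by simp)]
      ring_nf
      ring_nf at ih
      omega

theorem facet4_lattice_point_count (a b l : ℕ) (ha : 1 ≤ a) (h : 1 ≤ l + b) :
    ({p : ℤ × ℤ | 0 < p.1 ∧ p.1 < a ∧ -(b : ℤ) < p.2 ∧ p.2 < l * p.1}).Finite ∧
    (({p : ℤ × ℤ | 0 < p.1 ∧ p.1 < a ∧ -(b : ℤ) < p.2 ∧ p.2 < l * p.1}).ncard : ℤ)
      = ((a : ℤ) - 1) * ((b : ℤ) - 1) + (l : ℤ) * a * ((a : ℤ) - 1) / 2 := by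
  set F : Finset (ℤ × ℤ) :=
    (Finset.Ioo (0:ℤ) (a:ℤ)).biUnion
      (fun x => (Finset.Ioo (-(b:ℤ)) ((l:ℤ) * x)).image (fun y => (x, y))) with hF
  have hset : {p : ℤ × ℤ | 0 < p.1 ∧ p.1 < a ∧ -(b : ℤ) < p.2 ∧ p.2 < l * p.1} = ↑F := by
    ext ⟨x, y⟩
    simp only [hF, Set.mem_setOf_eq, Finset.coe_biUnion, Finset.mem_coe, Finset.mem_Ioo,
      Set.mem_iUnion, Finset.coe_image, Set.mem_image, Prod.mk.injEq]
    constructor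
    · rintro ⟨h1, h2, h3, h4⟩
      exact ⟨x, ⟨h1, h2⟩, y, ⟨h3, h4⟩, rfl, rfl⟩
    · rintro ⟨x', ⟨h1, h2⟩, y', ⟨h3, h4⟩, rfl, rfl⟩
      exact ⟨h1, h2, h3, h4⟩
  have hcard : F.card = ∑ x ∈ Finset.Ioo (0:ℤ) (a:ℤ),
      (Finset.Ioo (-(b:ℤ)) ((l:ℤ) * x)).card := by
    rw [hF, Finset.card_biUnion]
    · exact Finset.sum_congr rfl fun x _ =>
        Finset.card_image_of_injective _ (fun y z hyz => by simpa using hyz)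
    · intro x _ x' _ hxx'
      apply Finset.disjoint_left.2
      rintro ⟨u, v⟩ hu hv
      simp only [Finset.mem_image] at hu hv
      obtain ⟨y, _, hy⟩ := hu
      obtain ⟨z, _, hz⟩ := hv
      simp only [Prod.mk.injEq] at hy hz
      exact hxx' (hy.1.trans hz.1.symm)
  have key : (F.card : ℤ) = ∑ x ∈ Finset.Ioo (0:ℤ) (a:ℤ), ((l:ℤ) * x + (b:ℤ) - 1) := by
    rw [hcard]
    push_cast
    refine Finset.sum_congr rfl fun x hx => ?_
    rw [Int.card_Ioo]
    have hx1 : 1 ≤ x := (Finset.mem_Ioo.1 hx).1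
    have : (1:ℤ) ≤ (l:ℤ) * x + b := by nlinarith [Int.natCast_nonneg l, Int.natCast_nonneg b]
    rw [Int.toNat_of_nonneg (by omega)]
    ring
  have hsum := gauss_int a
  have hc : (Finset.Ioo (0:ℤ) (a:ℤ)).card = a - 1 := by
    rw [Int.card_Ioo]; omega
  refine ⟨hset ▸ F.finite_toSet, ?_⟩
  rw [hset, Set.ncard_coe_finset, key]
  simp only [add_sub_assoc]
  rw [Finset.sum_add_distrib, ← Finset.mul_sum, Finset.sum_const, hc]
  have hdiv : (l:ℤ) * a * ((a:ℤ) - 1) / 2 = (l:ℤ) * ∑ x ∈ Finset.Ioo (0:ℤ) (a:ℤ), x := by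
    have : (l:ℤ) * a * ((a:ℤ) - 1) = 2 * ((l:ℤ) * ∑ x ∈ Finset.Ioo (0:ℤ) (a:ℤ), x) := by
      linear_combination (-(l:ℤ)) * hsum
    rw [this, Int.mul_ediv_cancel_left _ (by norm_num)]
  rw [hdiv]
  have hcast : ((a - 1 : ℕ) : ℤ) = (a:ℤ) - 1 := by omega
  rw [nsmul_eq_mul, hcast]
  ring
end

section
/- Let l ≥ 0 be an integer. Let A : ℤ³ → ℤ⁵ be the ℤ-linear map given by the matrix with rows (1,0,0), (−1,0,0), (0,1,0), (0,0,1), (l,−1,−1), and let B : ℤ⁵ → ℤ² be the ℤ-linear map given by the matrix with rows (1,1,0,0,0) and (−l,0,1,1,1). Then A is injective, B is surjective, and the range of A equals the kernel of B; that is, the sequence 0 → ℤ³ → ℤ⁵ → ℤ² → 0 is exact. -/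
theorem short_exact_sequence_case_2_0_1 (l : ℤ) (hl : 0 ≤ l) :
    Function.Injective
        ((!![1, 0, 0; -1, 0, 0; 0, 1, 0; 0, 0, 1; l, -1, -1] :
          Matrix (Fin 5) (Fin 3) ℤ).mulVecLin) ∧
    Function.Surjective
        ((!![1, 1, 0, 0, 0; -l, 0, 1, 1, 1] :
          Matrix (Fin 2) (Fin 5) ℤ).mulVecLin) ∧
    LinearMap.range ((!![1, 0, 0; -1, 0, 0; 0, 1, 0; 0, 0, 1; l, -1, -1] :
          Matrix (Fin 5) (Fin 3) ℤ).mulVecLin)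
      = LinearMap.ker ((!![1, 1, 0, 0, 0; -l, 0, 1, 1, 1] :
          Matrix (Fin 2) (Fin 5) ℤ).mulVecLin) := by
  refine ⟨?_, ?_, ?_⟩
  · intro x y h
    have h0 := congrFun h 0
    have h2 := congrFun h 2
    have h3 := congrFun h 3
    simp [Matrix.mulVecLin_apply, Matrix.mulVec, dotProduct,
      Fin.sum_univ_five, Fin.sum_univ_three] at h0 h2 h3
    funext i
    fin_cases i <;> assumption
  · intro w
    refine ⟨![0, w 0, w 1, 0, 0], ?_⟩
    funext i
    fin_cases i <;>
      simp [Matrix.mulVecLin_apply, Matrix.mulVec, dotProduct,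
        Fin.sum_univ_five, Fin.sum_univ_three]
  · ext v
    simp only [LinearMap.mem_range, LinearMap.mem_ker]
    constructor
    · rintro ⟨x, rfl⟩
      funext i
      fin_cases i <;>
        (simp [Matrix.mulVecLin_apply, Matrix.mulVec, dotProduct,
          Fin.sum_univ_five, Fin.sum_univ_three]; try ring)
    · intro h
      have h0 := congrFun h 0
      have h1 := congrFun h 1
      simp [Matrix.mulVecLin_apply, Matrix.mulVec, dotProduct,
        Fin.sum_univ_five, Fin.sum_univ_three] at h0 h1
      refine ⟨![v 0, v 2, v 3], ?_⟩
      funext i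
      fin_cases i <;>
        simp [Matrix.mulVecLin_apply, Matrix.mulVec, dotProduct,
          Fin.sum_univ_five, Fin.sum_univ_three] <;> linarith
end
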